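/- arXiv:2601.13952 — 3 statements merged into one kernel-verified Lean document; each statement's English description precedes it below -/
import Mathlib

section
/- Let n = 4, let i, j ∈ [4] with i ≠ j, let u ∈ C_{i,j} and v ∈ R_{j,i}. Then u is compatible with v. Here, for k ∈ [4], R_k ≤ S([4]^2) is the set of permutations u with u({k} × ([4]∖{k})) = {k} × ([4]∖{k}) and u(x,y) = (x,y) whenever x ≠ k or y = k, and R_{k,ℓ} := {u ∈ R_k : u(k,ℓ) = (k,ℓ)}; symmetrically, C_k ≤ S([4]^2) is the set of permutations u with u(([4]∖{k}) × {k}) = ([4]∖{k}) × {k} and u(x,y) = (x,y) whenever y ≠ k or x = k, and C_{k,ℓ} := {u ∈ C_k : u(ℓ,k) = (ℓ,k)}. -/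
/-- The permutation `u ⊗ 1` of `[n]³`, acting as `(x,y,z) ↦ (u(x,y), z)`. -/
def tensorOne {n : ℕ} (u : Equiv.Perm (Fin n × Fin n)) :
    Equiv.Perm (Fin n × Fin n × Fin n) :=
  (Equiv.prodAssoc (Fin n) (Fin n) (Fin n)).permCongr (u.prodCongr (Equiv.refl (Fin n)))

/-- The permutation `1 ⊗ u` of `[n]³`, acting as `(x,y,z) ↦ (x, u(y,z))`. -/
def oneTensor {n : ℕ} (u : Equiv.Perm (Fin n × Fin n)) :
    Equiv.Perm (Fin n × Fin n × Fin n) :=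
  (Equiv.refl (Fin n)).prodCongr u

/-- `u` is compatible with `v` if `(v ⊗ 1)(1 ⊗ u) = (1 ⊗ u)(v ⊗ 1)` in `S([n]³)`. -/
def Compatible {n : ℕ} (u v : Equiv.Perm (Fin n × Fin n)) : Prop :=
  tensorOne v * oneTensor u = oneTensor u * tensorOne v

/-- Membership in `R_k ≤ S([4]²)`: `u` leaves `{k} × ([4] ∖ {k})` invariant and
fixes `(x,y)` whenever `x ≠ k` or `y = k`. -/
def memR (k : Fin 4) (u : Equiv.Perm (Fin 4 × Fin 4)) : Prop :=
  (⇑u '' {p : Fin 4 × Fin 4 | p.1 = k ∧ p.2 ≠ k} =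
      {p : Fin 4 × Fin 4 | p.1 = k ∧ p.2 ≠ k}) ∧
  ∀ p : Fin 4 × Fin 4, (p.1 ≠ k ∨ p.2 = k) → u p = p

/-- Membership in `R_{k,ℓ}`. -/
def memRij (k l : Fin 4) (u : Equiv.Perm (Fin 4 × Fin 4)) : Prop :=
  memR k u ∧ u (k, l) = (k, l)

/-- Membership in `C_k ≤ S([4]²)`: `u` leaves `([4] ∖ {k}) × {k}` invariant and
fixes `(x,y)` whenever `y ≠ k` or `x = k`. -/
def memC (k : Fin 4) (u : Equiv.Perm (Fin 4 × Fin 4)) : Prop :=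
  (⇑u '' {p : Fin 4 × Fin 4 | p.2 = k ∧ p.1 ≠ k} =
      {p : Fin 4 × Fin 4 | p.2 = k ∧ p.1 ≠ k}) ∧
  ∀ p : Fin 4 × Fin 4, (p.2 ≠ k ∨ p.1 = k) → u p = p

/-- Membership in `C_{k,ℓ}`. -/
def memCij (k l : Fin 4) (u : Equiv.Perm (Fin 4 × Fin 4)) : Prop :=
  memC k u ∧ u (l, k) = (l, k)

/-!
Since `u` fixes everything off column `i` and `v` everything off row `j`, they act as
`(y, i) ↦ (σ y, i)` and `(j, y) ↦ (j, τ y)` for some `σ, τ ∈ S([4])` fixing `i` and `j`.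
The two composites `(v ⊗ 1)(1 ⊗ u)` and `(1 ⊗ u)(v ⊗ 1)` can only differ on triples
`(j, y, i)`, which they send to `(j, τ (σ y), i)` and `(j, σ (τ y), i)`. So compatibility reduces
to `στ = τσ`, which holds because `σ` and `τ` both lie in the symmetric group of the two points
other than `i` and `j`, and that group is abelian.
-/

namespace Equiv.Perm

variable {α β : Type*}

lemma mem_pair_of_fixed_outside_pair {σ : Perm α} {a b : α}
    (h : ∀ x, x ≠ a → x ≠ b → σ x = x) {x : α} (hx : x = a ∨ x = b) :
    σ x = a ∨ σ x = b := by
  by_contra! hσx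
  have : σ x = x := σ.injective (h _ hσx.1 hσx.2)
  rcases hx with rfl | rfl <;> simp_all

lemma eq_one_or_eq_swap_of_fixed_outside_pair [DecidableEq α] {σ : Perm α} {a b : α}
    (h : ∀ x, x ≠ a → x ≠ b → σ x = x) : σ = 1 ∨ σ = swap a b := by
  have hσa := mem_pair_of_fixed_outside_pair h (Or.inl rfl)
  have hσb := mem_pair_of_fixed_outside_pair h (Or.inr rfl)
  rcases hσa with hσa | hσa
  · left
    have hσb : σ b = b := by grind [σ.injective.eq_iff]
    ext x
    by_cases hxa : x = a
    · simp [hxa, hσa]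
    by_cases hxb : x = b
    · simp [hxb, hσb]
    exact h x hxa hxb
  · right
    have hσb : σ b = a := by grind [σ.injective.eq_iff]
    ext x
    by_cases hxa : x = a
    · simp [hxa, hσa]
    by_cases hxb : x = b
    · simp [hxb, hσb]
    rw [swap_apply_of_ne_of_ne hxa hxb]
    exact h x hxa hxb

lemma commute_of_fixed_outside_pair [DecidableEq α] {σ τ : Perm α} {a b : α}
    (hσ : ∀ x, x ≠ a → x ≠ b → σ x = x) (hτ : ∀ x, x ≠ a → x ≠ b → τ x = x) :
    Commute σ τ := by
  rcases eq_one_or_eq_swap_of_fixed_outside_pair hσ with rfl | rfl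
  · exact Commute.one_left τ
  rcases eq_one_or_eq_swap_of_fixed_outside_pair hτ with rfl | rfl
  · exact Commute.one_right _
  · exact Commute.refl _

lemma commute_of_fixes_pair_of_card_eq_four [Fintype α] [DecidableEq α]
    (hα : Fintype.card α = 4) {i j : α} (hij : i ≠ j) {σ τ : Perm α}
    (hσi : σ i = i) (hσj : σ j = j) (hτi : τ i = i) (hτj : τ j = j) : Commute σ τ := by
  obtain ⟨a, b, -, hab⟩ := Finset.card_eq_two.mp
    (show ({i, j}ᶜ : Finset α).card = 2 by rw [Finset.card_compl, Finset.card_pair hij, hα])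
  have fixed_outside {π : Perm α} (hi : π i = i) (hj : π j = j) :
      ∀ x, x ≠ a → x ≠ b → π x = x := fun x hxa hxb => by
    have hx : x = i ∨ x = j := by
      by_contra! hx
      have : x ∈ ({a, b} : Finset α) := hab ▸ by simp [hx.1, hx.2]
      simp [hxa, hxb] at this
    rcases hx with rfl | rfl <;> assumption
  exact commute_of_fixed_outside_pair (fixed_outside hσi hσj) (fixed_outside hτi hτj)

lemma exists_eq_prodExtendRight [DecidableEq α] {v : Perm (α × β)} {a : α}
    (h : ∀ p : α × β, p.1 ≠ a → v p = p) : ∃ τ : Perm β, v = prodExtendRight a τ := by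
  have fst_apply : ∀ w : Perm (α × β), (∀ p : α × β, p.1 ≠ a → w p = p) →
      ∀ y, (w (a, y)).1 = a := fun w hw y => by
    by_contra hne
    exact hne (congrArg Prod.fst (w.injective (hw _ hne)))
  have hsymm : ∀ p : α × β, p.1 ≠ a → v.symm p = p := fun p hp => by
    rw [symm_apply_eq, h p hp]
  have mk_apply : ∀ w : Perm (α × β), (∀ p : α × β, p.1 ≠ a → w p = p) →
      ∀ y, (a, (w (a, y)).2) = w (a, y) := fun w hw y => Prod.ext (fst_apply w hw y).symm rfl
  let τ : Perm β :=
    { toFun := fun y => (v (a, y)).2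
      invFun := fun y => (v.symm (a, y)).2
      left_inv := fun y => by simp [mk_apply v h]
      right_inv := fun y => by simp [mk_apply v.symm hsymm] }
  refine ⟨τ, ext fun ⟨x, y⟩ => ?_⟩
  by_cases hx : x = a
  · subst hx
    rw [prodExtendRight_apply_eq]
    exact (mk_apply v h y).symm
  · rw [prodExtendRight_apply_ne _ hx, h _ hx]

variable [DecidableEq β]

def prodExtendLeft (b : β) (σ : Perm α) : Perm (α × β) :=
  (prodComm β α).permCongr (prodExtendRight b σ)

@[simp]
lemma prodExtendLeft_apply_eq (b : β) (σ : Perm α) (a : α) :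
    prodExtendLeft b σ (a, b) = (σ a, b) := by
  simp [prodExtendLeft]

lemma prodExtendLeft_apply_ne {b b' : β} (h : b' ≠ b) (σ : Perm α) (a : α) :
    prodExtendLeft b σ (a, b') = (a, b') := by
  simp [prodExtendLeft, prodExtendRight_apply_ne _ h]

lemma exists_eq_prodExtendLeft {u : Perm (α × β)} {b : β}
    (h : ∀ p : α × β, p.2 ≠ b → u p = p) : ∃ σ : Perm α, u = prodExtendLeft b σ := by
  obtain ⟨σ, hσ⟩ := exists_eq_prodExtendRight (v := (prodComm α β).permCongr u) (a := b)
    fun p hp => by simp [h p.swap hp]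
  refine ⟨σ, ?_⟩
  rw [prodExtendLeft, ← hσ]
  ext p <;> simp

end Equiv.Perm

open Equiv.Perm in
lemma compatible_prodExtendLeft_prodExtendRight {n : ℕ} {i j : Fin n}
    {σ τ : Equiv.Perm (Fin n)} (h : Commute σ τ) :
    Compatible (prodExtendLeft i σ) (prodExtendRight j τ) := by
  ext ⟨x, y, z⟩ : 1
  simp only [tensorOne, oneTensor, Equiv.Perm.mul_apply, Equiv.permCongr_apply]
  by_cases hz : z = i
  · subst hz
    by_cases hx : x = j
    · subst hx
      simpa using (DFunLike.congr_fun h.eq y).symm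
    · simp [prodExtendRight_apply_ne _ hx]
  · simp [prodExtendLeft_apply_ne hz]

theorem stmt_12 (i j : Fin 4) (hij : i ≠ j)
    (u v : Equiv.Perm (Fin 4 × Fin 4))
    (hu : memCij i j u) (hv : memRij j i v) :
    Compatible u v := by
  obtain ⟨⟨-, hufix⟩, huji⟩ := hu
  obtain ⟨⟨-, hvfix⟩, hvji⟩ := hv
  obtain ⟨σ, rfl⟩ := Equiv.Perm.exists_eq_prodExtendLeft fun p hp => hufix p (Or.inl hp)
  obtain ⟨τ, rfl⟩ := Equiv.Perm.exists_eq_prodExtendRight fun p hp => hvfix p (Or.inl hp)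
  apply compatible_prodExtendLeft_prodExtendRight
  refine Equiv.Perm.commute_of_fixes_pair_of_card_eq_four (Fintype.card_fin 4) hij ?_ ?_ ?_ ?_
  · simpa using hufix (i, i) (Or.inr rfl)
  · simpa using huji
  · simpa using hvji
  · simpa using hvfix (j, j) (Or.inr rfl)
end

section
/- Let n ≥ 1, let V be a bicompatible subgroup of S([n]^2), and let A ⊆ [n] be simultaneously a connected component of the graph G_R and a connected component of the graph G_C. Then for every v ∈ V there exist permutations σ_v, τ_v ∈ S(A) such that v(x,y) = (σ_v(x), τ_v(y)) for all x, y ∈ A. -/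
/-- The graph `G_R` on `[n]` attached to a subgroup `V ≤ S([n]²)`: distinct
`a, b` are adjacent iff some `v ∈ V` maps some point of row `a` to a point of
row `b`. -/
def GR {n : ℕ} (V : Subgroup (Equiv.Perm (Fin n × Fin n))) : SimpleGraph (Fin n) where
  Adj a b := a ≠ b ∧ ∃ x y : Fin n, ∃ v ∈ V, v (a, x) = (b, y)
  symm := by
    constructor
    rintro a b ⟨hab, x, y, v, hv, hvab⟩
    refine ⟨hab.symm, y, x, v⁻¹, V.inv_mem hv, ?_⟩
    rw [← hvab]
    exact Equiv.symm_apply_apply v (a, x)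
  loopless := ⟨fun a h => h.1 rfl⟩

/-- The graph `G_C` on `[n]` attached to a subgroup `V ≤ S([n]²)`: distinct
`a, b` are adjacent iff some `v ∈ V` maps some point of column `a` to a point
of column `b`. -/
def GC {n : ℕ} (V : Subgroup (Equiv.Perm (Fin n × Fin n))) : SimpleGraph (Fin n) where
  Adj a b := a ≠ b ∧ ∃ x y : Fin n, ∃ v ∈ V, v (x, a) = (y, b)
  symm := by
    constructor
    rintro a b ⟨hab, x, y, v, hv, hvab⟩
    refine ⟨hab.symm, y, x, v⁻¹, V.inv_mem hv, ?_⟩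
    rw [← hvab]
    exact Equiv.symm_apply_apply v (x, a)
  loopless := ⟨fun a h => h.1 rfl⟩

/-!
Compatibility of `u` with `v` says, read off the first and last coordinates of `[n]³`, that
`(v (x, (u (y, z)).1)).1 = (v (x, y)).1` and `(u (y, z)).2 = (u ((v (x, y)).2, z)).2`.
Hence the first coordinate of `v (x, y)` does not change when `y` moves along an edge of `G_R`,
and the second does not change when `x` moves along an edge of `G_C`. On a set `A` that is a
component of both graphs, `v (x, y)` is therefore `((v (x, a)).1, (v (a, y)).2)` for any fixed
`a ∈ A`; both coordinate maps send `A` to itself, and injectivity of `v` makes them injective,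
hence bijective on the finite set `A`.
-/

open Set

namespace SimpleGraph

variable {V : Type*} {G : SimpleGraph V}

theorem Reachable.apply_eq_of_adj {β : Type*} {f : V → β} (hf : ∀ a b, G.Adj a b → f a = f b)
    {a b : V} (h : G.Reachable a b) : f a = f b := by
  rw [reachable_iff_reflTransGen] at h
  simpa [Relation.reflTransGen_eq_self] using h.lift f hf

theorem reachable_of_forall_ne_adj {a b : V} (h : a ≠ b → G.Adj a b) : G.Reachable a b := by
  rcases eq_or_ne a b with rfl | hab
  · rfl
  · exact (h hab).reachable

variable {A : Set V} {x y : V}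

theorem mem_of_reachable_of_eq_setOf (hA : ∃ a, A = {x | G.Reachable a x}) (hx : x ∈ A)
    (h : G.Reachable x y) : y ∈ A := by
  obtain ⟨a, rfl⟩ := hA
  exact Reachable.trans hx h

theorem reachable_of_mem_of_eq_setOf (hA : ∃ a, A = {x | G.Reachable a x}) (hx : x ∈ A)
    (hy : y ∈ A) : G.Reachable x y := by
  obtain ⟨a, rfl⟩ := hA
  exact Reachable.trans (Reachable.symm hx) hy

end SimpleGraph

theorem Equiv.Perm.exists_perm_pair_of_eqOn_prodMap {α : Type*} {A : Set α} (hA : A.Finite)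
    (v : Equiv.Perm (α × α)) {f g : α → α} (hf : MapsTo f A A) (hg : MapsTo g A A)
    (hv : EqOn v (Prod.map f g) (A ×ˢ A)) :
    ∃ σ τ : Equiv.Perm A, ∀ (x y : α) (hx : x ∈ A) (hy : y ∈ A),
      v (x, y) = ((σ ⟨x, hx⟩ : A).val, (τ ⟨y, hy⟩ : A).val) := by
  have hf_inj : InjOn f A := fun x hx x' hx' h => by
    have : v (x, x) = v (x', x) := by
      rw [hv (mk_mem_prod hx hx), hv (mk_mem_prod hx' hx), Prod.map_apply, Prod.map_apply, h]
    exact congrArg Prod.fst (v.injective this)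
  have hg_inj : InjOn g A := fun y hy y' hy' h => by
    have : v (y, y) = v (y, y') := by
      rw [hv (mk_mem_prod hy hy), hv (mk_mem_prod hy hy'), Prod.map_apply, Prod.map_apply, h]
    exact congrArg Prod.snd (v.injective this)
  exact ⟨((hA.injOn_iff_bijOn_of_mapsTo hf).mp hf_inj).equiv f,
    ((hA.injOn_iff_bijOn_of_mapsTo hg).mp hg_inj).equiv g,
    fun x y hx hy => hv (mk_mem_prod hx hy)⟩

section Compatible

variable {n : ℕ} {u v : Equiv.Perm (Fin n × Fin n)}

@[simp]
theorem tensorOne_apply (x : Fin n) (p : Fin n × Fin n) :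
    tensorOne u (x, p) = ((u (x, p.1)).1, (u (x, p.1)).2, p.2) :=
  rfl

@[simp]
theorem oneTensor_apply (x : Fin n) (p : Fin n × Fin n) : oneTensor u (x, p) = (x, u p) :=
  rfl

theorem Compatible.fst_apply_fst (h : Compatible u v) (x y z : Fin n) :
    (v (x, (u (y, z)).1)).1 = (v (x, y)).1 := by
  simpa using congrArg Prod.fst (DFunLike.congr_fun h (x, y, z))

theorem Compatible.snd_apply_snd (h : Compatible u v) (x y z : Fin n) :
    (u (y, z)).2 = (u ((v (x, y)).2, z)).2 := by
  simpa using congrArg (·.2.2) (DFunLike.congr_fun h (x, y, z))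

end Compatible

section Graphs

variable {n : ℕ} {V : Subgroup (Equiv.Perm (Fin n × Fin n))} {v : Equiv.Perm (Fin n × Fin n)}

theorem fst_apply_eq_of_reachable_GR (hV : ∀ u ∈ V, Compatible u v)
    (x : Fin n) {y y' : Fin n} (h : (GR V).Reachable y y') :
    (v (x, y)).1 = (v (x, y')).1 := by
  refine h.apply_eq_of_adj (f := fun y => (v (x, y)).1) ?_
  rintro a b ⟨-, z, _, u, hu, hab⟩
  simpa [hab] using ((hV u hu).fst_apply_fst x a z).symm

theorem snd_apply_eq_of_reachable_GC (hV : ∀ u ∈ V, Compatible v u)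
    (y : Fin n) {x x' : Fin n} (h : (GC V).Reachable x x') :
    (v (x, y)).2 = (v (x', y)).2 := by
  refine h.apply_eq_of_adj (f := fun x => (v (x, y)).2) ?_
  rintro a b ⟨-, z, _, u, hu, hab⟩
  simpa [hab] using (hV u hu).snd_apply_snd z a y

theorem reachable_GR_fst_apply (hv : v ∈ V) (x y : Fin n) : (GR V).Reachable x (v (x, y)).1 :=
  SimpleGraph.reachable_of_forall_ne_adj fun h => ⟨h, y, (v (x, y)).2, v, hv, rfl⟩

theorem reachable_GC_snd_apply (hv : v ∈ V) (x y : Fin n) : (GC V).Reachable y (v (x, y)).2 :=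
  SimpleGraph.reachable_of_forall_ne_adj fun h => ⟨h, x, (v (x, y)).1, v, hv, rfl⟩

end Graphs

theorem stmt_16_general (n : ℕ)
    (V : Subgroup (Equiv.Perm (Fin n × Fin n)))
    (hV : ∀ u ∈ V, ∀ v ∈ V, Compatible u v)
    (A : Set (Fin n))
    (hAR : ∃ a₀ : Fin n, A = {x | (GR V).Reachable a₀ x})
    (hAC : ∃ a₁ : Fin n, A = {x | (GC V).Reachable a₁ x}) :
    ∀ v ∈ V, ∃ σ τ : Equiv.Perm A,
      ∀ (x y : Fin n) (hx : x ∈ A) (hy : y ∈ A),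
        v (x, y) = ((σ ⟨x, hx⟩ : A).val, (τ ⟨y, hy⟩ : A).val) := by
  intro v hv
  obtain ⟨a, ha⟩ : ∃ a, a ∈ A := by
    obtain ⟨a, rfl⟩ := hAR
    exact ⟨a, SimpleGraph.Reachable.refl a⟩
  refine v.exists_perm_pair_of_eqOn_prodMap A.toFinite (f := fun x => (v (x, a)).1)
    (g := fun y => (v (a, y)).2)
    (fun x hx => SimpleGraph.mem_of_reachable_of_eq_setOf hAR hx (reachable_GR_fst_apply hv x a))
    (fun y hy => SimpleGraph.mem_of_reachable_of_eq_setOf hAC hy (reachable_GC_snd_apply hv a y))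
    ?_
  rintro ⟨x, y⟩ ⟨hx, hy⟩
  exact Prod.ext
    (fst_apply_eq_of_reachable_GR (fun u hu => hV u hu v hv) x (SimpleGraph.reachable_of_mem_of_eq_setOf hAR hy ha))
    (snd_apply_eq_of_reachable_GC (hV v hv) y (SimpleGraph.reachable_of_mem_of_eq_setOf hAC hx ha))

theorem stmt_16 (n : ℕ) (hn : 1 ≤ n)
    (V : Subgroup (Equiv.Perm (Fin n × Fin n)))
    (hV : ∀ u ∈ V, ∀ v ∈ V, Compatible u v)
    (A : Set (Fin n))
    (hAR : ∃ a₀ : Fin n, A = {x | (GR V).Reachable a₀ x})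
    (hAC : ∃ a₁ : Fin n, A = {x | (GC V).Reachable a₁ x}) :
    ∀ v ∈ V, ∃ σ τ : Equiv.Perm A,
      ∀ (x y : Fin n) (hx : x ∈ A) (hy : y ∈ A),
        v (x, y) = ((σ ⟨x, hx⟩ : A).val, (τ ⟨y, hy⟩ : A).val) :=
  stmt_16_general n V hV A hAR hAC
end

section
/- Let n ≥ 1, let V be a bicompatible subgroup of S([n]^2), and let t ∈ [n] be an isolated vertex of the graph G_R (i.e. no edge of G_R is incident to t). Then every vertex in the connected component of t in the graph G_C is an isolated vertex of G_R. -/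
/-! A vertex `a` is isolated in `G_R` exactly when every `w ∈ V` maps row `a` into itself.
Evaluating the compatibility of `w` with `u` at `(c, a, y)` gives
`w ((u (c, a)).2, y) = ((u (c, (w (a, y)).1)).2, (w (a, y)).2)`, so if `w` preserves row `a` and
`u (c, a) = (d, b)`, then `w` preserves row `b`. Thus the rows preserved by `V` are closed under
`G_C`-adjacency. -/

theorem compatible_apply {n : ℕ} {u w : Equiv.Perm (Fin n × Fin n)} (h : Compatible w u)
    (x y z : Fin n) :
    ((u (x, (w (y, z)).1)).1, (u (x, (w (y, z)).1)).2, (w (y, z)).2) =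
      ((u (x, y)).1, w ((u (x, y)).2, z)) := by
  simpa [tensorOne, oneTensor] using congrArg (· (x, y, z)) h

theorem GR_isolated_iff {n : ℕ} (V : Subgroup (Equiv.Perm (Fin n × Fin n))) (a : Fin n) :
    (∀ b, ¬ (GR V).Adj a b) ↔ ∀ w ∈ V, ∀ y, (w (a, y)).1 = a := by
  constructor
  · intro ha w hw y
    by_contra hne
    exact ha _ ⟨Ne.symm hne, y, (w (a, y)).2, w, hw, rfl⟩
  · rintro ha b ⟨hne, x, y, w, hw, hwx⟩
    exact hne ((ha w hw x).symm.trans (congrArg Prod.fst hwx))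

theorem row_stable_of_GC_adj {n : ℕ} {V : Subgroup (Equiv.Perm (Fin n × Fin n))}
    (hV : ∀ u ∈ V, ∀ v ∈ V, Compatible u v) {a b : Fin n}
    (ha : ∀ w ∈ V, ∀ y, (w (a, y)).1 = a) (hab : (GC V).Adj a b) :
    ∀ w ∈ V, ∀ y, (w (b, y)).1 = b := by
  obtain ⟨-, c, d, u, hu, hca⟩ := hab
  intro w hw y
  have h := compatible_apply (hV w hw u hu) c a y
  rw [ha w hw y, hca] at h
  exact (congrArg Prod.fst (Prod.mk.inj h).2).symm

theorem row_stable_of_GC_reachable {n : ℕ} {V : Subgroup (Equiv.Perm (Fin n × Fin n))}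
    (hV : ∀ u ∈ V, ∀ v ∈ V, Compatible u v) {a b : Fin n}
    (ha : ∀ w ∈ V, ∀ y, (w (a, y)).1 = a) (hab : (GC V).Reachable a b) :
    ∀ w ∈ V, ∀ y, (w (b, y)).1 = b := by
  rw [SimpleGraph.reachable_iff_reflTransGen] at hab
  induction hab with
  | refl => exact ha
  | tail _ hcd ih => exact row_stable_of_GC_adj hV ih hcd

theorem stmt_17_general (n : ℕ)
    (V : Subgroup (Equiv.Perm (Fin n × Fin n)))
    (hV : ∀ u ∈ V, ∀ v ∈ V, Compatible u v)
    (t : Fin n) (ht : ∀ b : Fin n, ¬ (GR V).Adj t b) :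
    ∀ s : Fin n, (GC V).Reachable t s → ∀ b : Fin n, ¬ (GR V).Adj s b := fun s hts =>
  (GR_isolated_iff V s).mpr <|
    row_stable_of_GC_reachable hV ((GR_isolated_iff V t).mp ht) hts

theorem stmt_17 (n : ℕ) (hn : 1 ≤ n)
    (V : Subgroup (Equiv.Perm (Fin n × Fin n)))
    (hV : ∀ u ∈ V, ∀ v ∈ V, Compatible u v)
    (t : Fin n) (ht : ∀ b : Fin n, ¬ (GR V).Adj t b) :
    ∀ s : Fin n, (GC V).Reachable t s → ∀ b : Fin n, ¬ (GR V).Adj s b :=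
  stmt_17_general n V hV t ht
end
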